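/- Let B be a left semi-brace and I a subset of B. Then I is an ideal of B if and only if: (1) I+0 ⊆ I; (2) I∩G is a normal subgroup of (G,+); (3) λ_g(I) ⊆ I for every g ∈ G; (4) I is a normal subgroup of (B,∘). -/
import Mathlib


/-- A left semi-brace: `(B,+)` is a left cancellative semigroup, `(B,*)` is a group
(whose identity `1` plays the role of `0` in the additive notation of the paper, and
`a⁻¹` plays the role of `a⁻`), and `a ∘ (b + c) = a ∘ b + a ∘ (a⁻ + c)` holds. -/
class LeftSemiBrace (B : Type*) extends Group B, Add B where
  add_assoc : ∀ a b c : B, a + b + c = a + (b + c)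
  add_left_cancel : ∀ a b c : B, a + b = a + c → b = c
  circ_add : ∀ a b c : B, a * (b + c) = a * b + a * (a⁻¹ + c)

namespace LeftSemiBrace

variable {B : Type*} [LeftSemiBrace B]

/-- The set `E` of additive idempotents. -/
def E (B : Type*) [LeftSemiBrace B] : Set B := {e | e + e = e}

/-- The set `G = B + 0`. -/
def G (B : Type*) [LeftSemiBrace B] : Set B := {x | ∃ b : B, x = b + 1}

/-- `λ_a (b) = a ∘ (a⁻ + b)`. -/
def lam (a b : B) : B := a * (a⁻¹ + b)

/-- `ρ_b (a) = (a⁻ + b)⁻ ∘ b`. -/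
def rho (b a : B) : B := (a⁻¹ + b)⁻¹ * b

/-- `a · b = λ_a(a⁻) + a ∘ b + λ_b(b⁻)`. -/
def dot (a b : B) : B := lam a a⁻¹ + a * b + lam b b⁻¹

/-- The group part `g_b = b + 0` of an element `b`. -/
def gp (b : B) : B := b + 1

/-- The additive inverse (within the group `(G,+)`) of the group part of an element:
for `g ∈ G` one has `neg g = -g`, since `-g_a = λ_a(a⁻) = a ∘ (a⁻ + a⁻)`. -/
def neg (a : B) : B := a * (a⁻¹ + a⁻¹)

/-- The idempotent part `e_b = -g_b + b` of an element `b`. -/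
def ep (b : B) : B := neg (gp b) + b

/-- `S` is a subsemigroup of `(B,+)`. -/
def IsAddSubsemigroup (S : Set B) : Prop := ∀ x ∈ S, ∀ y ∈ S, x + y ∈ S

/-- `S` is a subgroup of the multiplicative group `(B,∘)`. -/
def IsCircSubgroup (S : Set B) : Prop :=
  (1 : B) ∈ S ∧ (∀ x ∈ S, ∀ y ∈ S, x * y ∈ S) ∧ ∀ x ∈ S, x⁻¹ ∈ S

/-- `S` is a normal subgroup of the multiplicative group `(B,∘)`. -/
def IsCircNormal (S : Set B) : Prop :=
  IsCircSubgroup S ∧ ∀ x ∈ S, ∀ b : B, b * x * b⁻¹ ∈ S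

/-- `S` is a subgroup of the group `(G,+)`. -/
def IsAddSubgroupOfG (S : Set B) : Prop :=
  S ⊆ G B ∧ (1 : B) ∈ S ∧ (∀ x ∈ S, ∀ y ∈ S, x + y ∈ S) ∧ ∀ x ∈ S, neg x ∈ S

/-- `S` is a normal subgroup of the group `(G,+)`. -/
def IsAddNormalSubgroupOfG (S : Set B) : Prop :=
  IsAddSubgroupOfG S ∧ ∀ g ∈ G B, ∀ x ∈ S, g + x + neg g ∈ S

/-- `I` is an ideal of the left semi-brace `B` (Definition 17 of Catino–Colazzo–Stefanelli):
`I` is a subsemigroup of `(B,+)`, a normal subgroup of `(B,∘)`, `I ∩ G` is a normal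
subgroup of `(G,+)`, `ρ_b(n) ∈ I` for all `b ∈ B`, `n ∈ I ∩ G`, and `λ_g(e) ∈ I` for all
`g ∈ G`, `e ∈ I ∩ E`. -/
def IsIdeal (I : Set B) : Prop :=
  IsAddSubsemigroup I ∧ IsCircNormal I ∧ IsAddNormalSubgroupOfG (I ∩ G B) ∧
    (∀ b : B, ∀ n ∈ I ∩ G B, rho b n ∈ I) ∧
    (∀ g ∈ G B, ∀ e ∈ I ∩ E B, lam g e ∈ I)

/-- `I` is a left ideal of the left semi-brace `B`. -/
def IsLeftIdeal (I : Set B) : Prop :=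
  (∀ x ∈ I, x + 1 ∈ I) ∧ IsAddSubgroupOfG (I ∩ G B) ∧
    (∀ g ∈ G B, ∀ x ∈ I, lam g x ∈ I) ∧ IsCircSubgroup I

/-- The subgroup of `(G,+)` generated by a subset `S` of `G`. -/
def addClosure (S : Set B) : Set B :=
  ⋂₀ {T : Set B | S ⊆ T ∧ (1 : B) ∈ T ∧ (∀ x ∈ T, ∀ y ∈ T, x + y ∈ T) ∧ ∀ x ∈ T, neg x ∈ T}

/-- `X · Y`: the subgroup of `(G,+)` generated by `{x · y : x ∈ X, y ∈ Y}`. -/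
def dotSet (X Y : Set B) : Set B := addClosure {z | ∃ x ∈ X, ∃ y ∈ Y, z = dot x y}

/-- `S + E = {s + e : s ∈ S, e ∈ E}`. -/
def addE (S : Set B) : Set B := {z | ∃ s ∈ S, ∃ e ∈ E B, z = s + e}

/-- The right series of `B`: `rightSeries B n = B^(n+1)`, where `B^(1) = B` and
`B^(n+1) = B^(n) · B + E`. -/
def rightSeries (B : Type*) [LeftSemiBrace B] : ℕ → Set B
  | 0 => Set.univ
  | n + 1 => addE (dotSet (rightSeries B n) Set.univ)

/-- The left series of `B`: `leftSeries B n = B^(n+1)`, where `B^1 = B` and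
`B^(n+1) = B · B^n + E`. -/
def leftSeries (B : Type*) [LeftSemiBrace B] : ℕ → Set B
  | 0 => Set.univ
  | n + 1 => addE (dotSet Set.univ (leftSeries B n))

/-- The right series of the skew left brace `G`: `rightSeriesG B n = G^(n+1)`, where
`G^(1) = G` and `G^(n+1) = G^(n) · G`. -/
def rightSeriesG (B : Type*) [LeftSemiBrace B] : ℕ → Set B
  | 0 => G B
  | n + 1 => dotSet (rightSeriesG B n) (G B)

/-- The series `bracketSeries B n = B^[n+1]`, where `B^[1] = B` and `B^[n+1] = H_n + E`
with `H_n` the subgroup of `(G,+)` generated by `⋃_{i=1}^{n} B^[i] · B^[n+1-i]`. -/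
def bracketSeries (B : Type*) [LeftSemiBrace B] : ℕ → Set B
  | 0 => Set.univ
  | n + 1 =>
      addE (addClosure (⋃ i : Fin (n + 1),
        dotSet (bracketSeries B i.1) (bracketSeries B (n - i.1))))
  decreasing_by
  · exact i.isLt
  · exact Nat.lt_succ_of_le (Nat.sub_le n i.1)

/-- The socle `Soc(B) = {a ∈ B : ρ_a = ρ_0, λ_a = λ_0}`. -/
def Soc (B : Type*) [LeftSemiBrace B] : Set B :=
  {a | rho a = rho (1 : B) ∧ lam a = lam (1 : B)}

/-- The generalized socle `Zoc(B) = Soc(B) + E`. -/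
def Zoc (B : Type*) [LeftSemiBrace B] : Set B :=
  {z | ∃ a ∈ Soc B, ∃ e ∈ E B, z = a + e}

/-- The lower central series of the group `(G,+)`:  `γ_1 = G` and `γ_{n+1}` is the
subgroup of `(G,+)` generated by the additive commutators `-x - y + x + y` with
`x ∈ γ_n`, `y ∈ G`. -/
def lowerCentralSeriesG (B : Type*) [LeftSemiBrace B] : ℕ → Set B
  | 0 => G B
  | n + 1 => addClosure
      {z | ∃ x ∈ lowerCentralSeriesG B n, ∃ y ∈ G B, z = neg x + neg y + x + y}

/-- The group `(G,+)` is nilpotent. -/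
def IsNilpotentGAdd (B : Type*) [LeftSemiBrace B] : Prop :=
  ∃ n : ℕ, lowerCentralSeriesG B n = {(1 : B)}

/-! ### Auxiliary lemmas for the proof of `isIdeal_iff` -/

lemma sb_one_add (c : B) : (1 : B) + c = c := by
  have h := circ_add (1 : B) c c
  simp only [one_mul, inv_one] at h
  exact (LeftSemiBrace.add_left_cancel c c ((1 : B) + c) h).symm

lemma sb_circ_add' (a b c : B) : a * (b + c) = a * b + lam a c := circ_add a b c

lemma sb_mul_eq (a c : B) : a * c = a + lam a c := by
  have h := sb_circ_add' a 1 c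
  rw [sb_one_add, mul_one] at h
  exact h

lemma sb_lam_add (a b c : B) : lam a (b + c) = lam a b + lam a c := by
  have h : a * ((a⁻¹ + b) + c) = a * (a⁻¹ + b) + lam a c := sb_circ_add' a (a⁻¹ + b) c
  rw [LeftSemiBrace.add_assoc] at h
  exact h

lemma sb_lam_lam (a b c : B) : lam a (lam b c) = lam (a * b) c := by
  have h1 : a * (b * c) = a * b + lam a (lam b c) := by
    rw [sb_mul_eq b c, sb_circ_add']
  have h2 : a * (b * c) = a * b + lam (a * b) c := by
    rw [← mul_assoc, sb_mul_eq (a * b) c]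
  exact LeftSemiBrace.add_left_cancel (a * b) _ _ (h1.symm.trans h2)

lemma sb_lam_one_apply (c : B) : lam (1 : B) c = c := by
  simp only [lam, inv_one, one_mul, sb_one_add]

lemma sb_lam_inv (a c : B) : lam a (lam a⁻¹ c) = c := by
  rw [sb_lam_lam, mul_inv_cancel, sb_lam_one_apply]

lemma sb_add_eq_mul_lam (x y : B) : x + y = x * lam x⁻¹ y := by
  rw [sb_mul_eq x (lam x⁻¹ y), sb_lam_inv]

lemma sb_add_neg (a : B) : a + neg a = 1 := by
  have h : neg a = lam a a⁻¹ := rfl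
  rw [h, ← sb_mul_eq, mul_inv_cancel]

lemma sb_mem_E_iff {e : B} : e ∈ E B ↔ e + 1 = 1 := by
  constructor
  · intro he
    have he' : e + e = e := he
    have hn := sb_add_neg e
    calc e + 1 = e + (e + neg e) := by rw [hn]
      _ = (e + e) + neg e := (LeftSemiBrace.add_assoc e e (neg e)).symm
      _ = e + neg e := by rw [he']
      _ = 1 := hn
  · intro h
    show e + e = e
    calc e + e = e + (1 + e) := by rw [sb_one_add]
      _ = (e + 1) + e := (LeftSemiBrace.add_assoc e 1 e).symm
      _ = 1 + e := by rw [h]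
      _ = e := sb_one_add e

lemma sb_E_absorb {e : B} (he : e ∈ E B) (b : B) : e + b = b := by
  have h1 := sb_mem_E_iff.mp he
  calc e + b = e + (1 + b) := by rw [sb_one_add]
    _ = (e + 1) + b := (LeftSemiBrace.add_assoc e 1 b).symm
    _ = 1 + b := by rw [h1]
    _ = b := sb_one_add b

lemma sb_lam_E {e : B} (he : e ∈ E B) (x : B) : lam e x = e * x := by
  rw [sb_mul_eq e x, sb_E_absorb he]

lemma sb_lam_mem_E (a : B) {e : B} (he : e ∈ E B) : lam a e ∈ E B := by
  rw [sb_mem_E_iff]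
  calc lam a e + 1 = lam a e + lam a (lam a⁻¹ 1) := by rw [sb_lam_inv]
    _ = lam a (e + lam a⁻¹ 1) := (sb_lam_add a e _).symm
    _ = lam a (lam a⁻¹ 1) := by rw [sb_E_absorb he]
    _ = 1 := sb_lam_inv a 1

lemma sb_inv_mem_E {e : B} (he : e ∈ E B) : e⁻¹ ∈ E B := by
  rw [sb_mem_E_iff]
  have h : e * (e⁻¹ + 1) = e * 1 := by
    rw [sb_circ_add' e e⁻¹ 1, mul_inv_cancel, sb_lam_E he, mul_one, sb_one_add]
  exact mul_left_cancel h

lemma sb_mem_G_iff {x : B} : x ∈ G B ↔ x + 1 = x := by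
  constructor
  · rintro ⟨b, rfl⟩
    rw [LeftSemiBrace.add_assoc, sb_one_add]
  · intro h
    exact ⟨x, h.symm⟩

lemma sb_gp_mem_G (b : B) : b + 1 ∈ G B := ⟨b, rfl⟩

lemma sb_neg_mem_G (a : B) : neg a ∈ G B := by
  rw [sb_mem_G_iff]
  have h : a + (neg a + 1) = a + neg a := by
    rw [← LeftSemiBrace.add_assoc, sb_add_neg a, sb_one_add]
  exact LeftSemiBrace.add_left_cancel a _ _ h

lemma sb_neg_add {g : B} (hg : g ∈ G B) : neg g + g = 1 := by
  have h : g + (neg g + g) = g + 1 := by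
    rw [← LeftSemiBrace.add_assoc, sb_add_neg g, sb_one_add, sb_mem_G_iff.mp hg]
  exact LeftSemiBrace.add_left_cancel g _ _ h

lemma sb_neg_neg {g : B} (hg : g ∈ G B) : neg (neg g) = g := by
  have h : neg g + neg (neg g) = neg g + g := by
    rw [sb_add_neg (neg g), sb_neg_add hg]
  exact LeftSemiBrace.add_left_cancel (neg g) _ _ h

lemma sb_lam_g_one {g : B} (hg : g ∈ G B) : lam g 1 = 1 := by
  have h : g + lam g 1 = g + 1 := by
    rw [← sb_mul_eq g 1, mul_one, sb_mem_G_iff.mp hg]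
  exact LeftSemiBrace.add_left_cancel g _ _ h

lemma sb_inv_mem_G {g : B} (hg : g ∈ G B) : g⁻¹ ∈ G B := by
  rw [sb_mem_G_iff]
  have h : g * (g⁻¹ + 1) = g * g⁻¹ := by
    rw [sb_circ_add' g g⁻¹ 1, sb_lam_g_one hg, mul_inv_cancel, sb_one_add]
  exact mul_left_cancel h

lemma sb_lam_mem_G {g x : B} (hg : g ∈ G B) (hx : x ∈ G B) : lam g x ∈ G B := by
  rw [sb_mem_G_iff]
  calc lam g x + 1 = lam g x + lam g 1 := by rw [sb_lam_g_one hg]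
    _ = lam g (x + 1) := (sb_lam_add g x 1).symm
    _ = lam g x := by rw [sb_mem_G_iff.mp hx]

lemma sb_gp_mul_E {a e : B} (he : e ∈ E B) : a * e + 1 = a + 1 := by
  calc a * e + 1 = (a + lam a e) + 1 := by rw [← sb_mul_eq]
    _ = a + (lam a e + 1) := LeftSemiBrace.add_assoc a _ 1
    _ = a + 1 := by rw [sb_mem_E_iff.mp (sb_lam_mem_E a he)]

lemma sb_ep_mem_E (b : B) : neg (b + 1) + b ∈ E B := by
  rw [sb_mem_E_iff, LeftSemiBrace.add_assoc]
  exact sb_neg_add (sb_gp_mem_G b)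

lemma sb_gp_add_ep (b : B) : (b + 1) + (neg (b + 1) + b) = b := by
  rw [← LeftSemiBrace.add_assoc, sb_add_neg, sb_one_add]

/-- The crucial lemma: if `I` is closed under `· + 1` and is a normal subgroup of
`(B,∘)`, then `λ_u(e)⁻¹ ∘ e ∈ I` for every `u ∈ I` and `e ∈ E`. -/
lemma sb_crux {I : Set B} (h1 : ∀ x ∈ I, x + 1 ∈ I) (h4 : IsCircNormal I)
    {u : B} (hu : u ∈ I) {e : B} (he : e ∈ E B) : (lam u e)⁻¹ * e ∈ I := by
  have he' : e⁻¹ ∈ E B := sb_inv_mem_E he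
  have hconjI : e⁻¹ * u⁻¹ * e ∈ I := by
    have h := h4.2 u⁻¹ (h4.1.2.2 u hu) e⁻¹
    rwa [inv_inv] at h
  have hj : e⁻¹ * u⁻¹ * e + 1 ∈ I := h1 _ hconjI
  have hjeq : e⁻¹ * u⁻¹ * e + 1 = e⁻¹ * u⁻¹ * lam u e := by
    have key : e⁻¹ * (u⁻¹ + e) = e⁻¹ * u⁻¹ + 1 := by
      have h5 : lam e⁻¹ (u⁻¹ + e) = lam e⁻¹ u⁻¹ + lam e⁻¹ e := sb_lam_add e⁻¹ u⁻¹ e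
      simp only [sb_lam_E he'] at h5
      rw [inv_mul_cancel] at h5
      exact h5
    calc e⁻¹ * u⁻¹ * e + 1 = e⁻¹ * u⁻¹ + 1 := sb_gp_mul_E he
      _ = e⁻¹ * (u⁻¹ + e) := key.symm
      _ = e⁻¹ * (u⁻¹ * lam u e) := by rw [sb_add_eq_mul_lam u⁻¹ e, inv_inv]
      _ = e⁻¹ * u⁻¹ * lam u e := (mul_assoc _ _ _).symm
  rw [hjeq] at hj
  have hmem : (e⁻¹ * u⁻¹ * lam u e)⁻¹ * (e⁻¹ * u⁻¹ * e) ∈ I :=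
    h4.1.2.1 _ (h4.1.2.2 _ hj) _ hconjI
  have heq : (e⁻¹ * u⁻¹ * lam u e)⁻¹ * (e⁻¹ * u⁻¹ * e) = (lam u e)⁻¹ * e := by group
  rwa [heq] at hmem

/-- If `I` satisfies the four conditions, then `(λ_m b)⁻¹ ∘ b ∈ I` for `m ∈ I ∩ G`. -/
lemma sb_L {I : Set B} (h1 : ∀ x ∈ I, x + 1 ∈ I)
    (h2 : IsAddNormalSubgroupOfG (I ∩ G B))
    (h3 : ∀ g ∈ G B, ∀ x ∈ I, lam g x ∈ I) (h4 : IsCircNormal I)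
    {m : B} (hmI : m ∈ I) (hmG : m ∈ G B) (b : B) : (lam m b)⁻¹ * b ∈ I := by
  obtain ⟨g, e, hgG, heE, hb⟩ : ∃ g e, g ∈ G B ∧ e ∈ E B ∧ b = g + e :=
    ⟨b + 1, neg (b + 1) + b, sb_gp_mem_G b, sb_ep_mem_E b, (sb_gp_add_ep b).symm⟩
  subst hb
  have hmiI : m⁻¹ ∈ I := h4.1.2.2 m hmI
  have hmiG : m⁻¹ ∈ G B := sb_inv_mem_G hmG
  have hgiG : g⁻¹ ∈ G B := sb_inv_mem_G hgG
  have hkIG : neg g + m⁻¹ + neg (neg g) ∈ I ∩ G B :=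
    h2.2 (neg g) (sb_neg_mem_G g) m⁻¹ ⟨hmiI, hmiG⟩
  have hgk : g + (neg g + m⁻¹ + neg (neg g)) = m⁻¹ + g := by
    rw [sb_neg_neg hgG]
    calc g + ((neg g + m⁻¹) + g) = g + (neg g + (m⁻¹ + g)) := by
          rw [LeftSemiBrace.add_assoc (neg g) m⁻¹ g]
      _ = (g + neg g) + (m⁻¹ + g) := (LeftSemiBrace.add_assoc g (neg g) (m⁻¹ + g)).symm
      _ = 1 + (m⁻¹ + g) := by rw [sb_add_neg g]
      _ = m⁻¹ + g := sb_one_add _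
  set k₁ := lam g⁻¹ (neg g + m⁻¹ + neg (neg g)) with hk1
  have hk1I : k₁ ∈ I := h3 g⁻¹ hgiG _ hkIG.1
  have hk1iI : k₁⁻¹ ∈ I := h4.1.2.2 k₁ hk1I
  set e₁ := lam g⁻¹ e with he1
  have he1E : e₁ ∈ E B := sb_lam_mem_E g⁻¹ heE
  have hge : g + e = g * e₁ := sb_add_eq_mul_lam g e
  have hlmg : lam m g = m * (g * k₁) := by
    show m * (m⁻¹ + g) = m * (g * k₁)
    rw [← hgk, sb_add_eq_mul_lam g (neg g + m⁻¹ + neg (neg g)), ← hk1]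
  have hlmb : lam m (g + e) = (m * (g * k₁)) * lam k₁⁻¹ e₁ := by
    calc lam m (g + e) = lam m g + lam m e := sb_lam_add m g e
      _ = lam m g * lam (lam m g)⁻¹ (lam m e) := sb_add_eq_mul_lam _ _
      _ = lam m g * lam ((lam m g)⁻¹ * m) e := by rw [sb_lam_lam]
      _ = (m * (g * k₁)) * lam ((m * (g * k₁))⁻¹ * m) e := by rw [hlmg]
      _ = (m * (g * k₁)) * lam (k₁⁻¹ * g⁻¹) e := by
          rw [show (m * (g * k₁))⁻¹ * m = k₁⁻¹ * g⁻¹ by group]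
      _ = (m * (g * k₁)) * lam k₁⁻¹ e₁ := by rw [← sb_lam_lam, ← he1]
  have hcrux : (lam k₁⁻¹ e₁)⁻¹ * e₁ ∈ I := sb_crux h1 h4 hk1iI he1E
  have hconj1 : (lam k₁⁻¹ e₁)⁻¹ * k₁⁻¹ * lam k₁⁻¹ e₁ ∈ I := by
    have h := h4.2 k₁⁻¹ hk1iI (lam k₁⁻¹ e₁)⁻¹
    rwa [inv_inv] at h
  have hconj2 : e₁⁻¹ * (g⁻¹ * m⁻¹ * g) * e₁ ∈ I := by
    have hA := h4.2 m⁻¹ hmiI g⁻¹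
    rw [inv_inv] at hA
    have hB := h4.2 _ hA e₁⁻¹
    rwa [inv_inv] at hB
  have hmem : ((lam k₁⁻¹ e₁)⁻¹ * k₁⁻¹ * lam k₁⁻¹ e₁) *
      (((lam k₁⁻¹ e₁)⁻¹ * e₁) * (e₁⁻¹ * (g⁻¹ * m⁻¹ * g) * e₁)) ∈ I :=
    h4.1.2.1 _ hconj1 _ (h4.1.2.1 _ hcrux _ hconj2)
  have hfinal : (lam m (g + e))⁻¹ * (g + e) =
      ((lam k₁⁻¹ e₁)⁻¹ * k₁⁻¹ * lam k₁⁻¹ e₁) *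
      (((lam k₁⁻¹ e₁)⁻¹ * e₁) * (e₁⁻¹ * (g⁻¹ * m⁻¹ * g) * e₁)) := by
    rw [hlmb, hge]; group
  rw [hfinal]
  exact hmem

/-- characterization of ideals: `I` is an ideal of `B` iff
(1) `I + 0 ⊆ I`; (2) `I ∩ G` is a normal subgroup of `(G,+)`; (3) `λ_g(I) ⊆ I` for
every `g ∈ G`; (4) `I` is a normal subgroup of `(B,∘)`. -/
theorem isIdeal_iff (I : Set B) :
    IsIdeal I ↔
      (∀ x ∈ I, x + 1 ∈ I) ∧
        IsAddNormalSubgroupOfG (I ∩ G B) ∧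
        (∀ g ∈ G B, ∀ x ∈ I, lam g x ∈ I) ∧
        IsCircNormal I := by
  constructor
  · rintro ⟨hadd, hnorm, hG, hrho, hlamE⟩
    refine ⟨fun x hx => hadd x hx 1 hnorm.1.1, hG, ?_, hnorm⟩
    intro g hgG x hx
    have hgxI : x + 1 ∈ I := hadd x hx 1 hnorm.1.1
    have hgxG : x + 1 ∈ G B := sb_gp_mem_G x
    have hgxIG : x + 1 ∈ I ∩ G B := ⟨hgxI, hgxG⟩
    have hnegIG : neg (x + 1) ∈ I ∩ G B := hG.1.2.2.2 _ hgxIG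
    have hexI : neg (x + 1) + x ∈ I := hadd _ hnegIG.1 x hx
    have hexE : neg (x + 1) + x ∈ E B := sb_ep_mem_E x
    have hgi : g⁻¹ ∈ G B := sb_inv_mem_G hgG
    have hkey : lam g (x + 1) ∈ I := by
      obtain ⟨m, hmI, hmG, hmg⟩ : ∃ m, m ∈ I ∧ m ∈ G B ∧ m + g⁻¹ = g⁻¹ + (x + 1) := by
        refine ⟨g⁻¹ + (x + 1) + neg g⁻¹, (hG.2 g⁻¹ hgi _ hgxIG).1,
          (hG.2 g⁻¹ hgi _ hgxIG).2, ?_⟩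
        calc (g⁻¹ + (x + 1) + neg g⁻¹) + g⁻¹
            = (g⁻¹ + (x + 1)) + (neg g⁻¹ + g⁻¹) := LeftSemiBrace.add_assoc _ _ _
          _ = (g⁻¹ + (x + 1)) + 1 := by rw [sb_neg_add hgi]
          _ = g⁻¹ + ((x + 1) + 1) := LeftSemiBrace.add_assoc _ _ _
          _ = g⁻¹ + (x + 1) := by rw [sb_mem_G_iff.mp hgxG]
      have hmiIG : m⁻¹ ∈ I ∩ G B := ⟨hnorm.1.2.2 m hmI, sb_inv_mem_G hmG⟩
      have hr : rho g⁻¹ m⁻¹ ∈ I := hrho g⁻¹ m⁻¹ hmiIG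
      have hreq : rho g⁻¹ m⁻¹ = (lam g (x + 1))⁻¹ := by
        show ((m⁻¹)⁻¹ + g⁻¹)⁻¹ * g⁻¹ = (g * (g⁻¹ + (x + 1)))⁻¹
        rw [inv_inv, hmg]
        group
      have h := hnorm.1.2.2 _ hr
      rwa [hreq, inv_inv] at h
    have hlex : lam g (neg (x + 1) + x) ∈ I := hlamE g hgG _ ⟨hexI, hexE⟩
    have h := hadd _ hkey _ hlex
    rwa [← sb_lam_add, sb_gp_add_ep] at h
  · rintro ⟨h1, h2, h3, h4⟩
    refine ⟨?_, h4, h2, ?_, ?_⟩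
    · intro x hx y hy
      have hgxG : x + 1 ∈ G B := sb_gp_mem_G x
      have heq : x + y = (x + 1) * lam (x + 1)⁻¹ y := by
        rw [← sb_add_eq_mul_lam (x + 1) y, LeftSemiBrace.add_assoc, sb_one_add]
      rw [heq]
      exact h4.1.2.1 _ (h1 x hx) _ (h3 (x + 1)⁻¹ (sb_inv_mem_G hgxG) y hy)
    · intro b n hn
      have heq : rho b n = ((lam n b)⁻¹ * n * lam n b) * ((lam n b)⁻¹ * b) := by
        show (n⁻¹ + b)⁻¹ * b = _
        rw [sb_add_eq_mul_lam n⁻¹ b, inv_inv]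
        group
      have hc : (lam n b)⁻¹ * n * lam n b ∈ I := by
        have h := h4.2 n hn.1 (lam n b)⁻¹
        rwa [inv_inv] at h
      rw [heq]
      exact h4.1.2.1 _ hc _ (sb_L h1 h2 h3 h4 hn.1 hn.2 b)
    · intro g hg e he
      exact h3 g hg e he.1

end LeftSemiBrace
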